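/- arXiv:2007.05975 — 8 statements merged into one kernel-verified Lean document; each statement's English description precedes it below -/
import Mathlib

section
/- Suppose the set of permissible databases is unconstrained, i.e., I = T^n. Then for all databases D, D' ∈ I, D ∼ D' (D and D' are minimally secretly different) if and only if there exist an index i ∈ [n] and values u, v ∈ T such that tdiff(D,D') = sdiff(D,D') = {(i,u,v)}; equivalently, D and D' differ at exactly one index i and the pair (D_i, D'_i) is an edge of the secret graph. -/
/-- The total difference between two databases `D` and `D'`: triples `(i, u, v)`
with `u = D i`, `v = D' i`, `u ≠ v`. -/
def totalDiff {T : Type*} {n : ℕ} (D D' : Fin n → T) : Set (Fin n × T × T) :=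
  {x | D x.1 = x.2.1 ∧ D' x.1 = x.2.2 ∧ x.2.1 ≠ x.2.2}

/-- The secret difference: the subset of the total difference whose value pair is an
edge of the secret graph `G`. -/
def secretDiff {T : Type*} {n : ℕ} (G : SimpleGraph T) (D D' : Fin n → T) :
    Set (Fin n × T × T) :=
  {x ∈ totalDiff D D' | G.Adj x.2.1 x.2.2}

/-- Databases `D, D' ∈ I` are minimally secretly different (adjacent in the database
adjacency graph): the secret difference is nonempty, and no permissible `D''` with
nonempty secret difference has a strictly smaller secret difference, or the same
secret difference with a strictly smaller total difference. -/
def BlowfishAdj {T : Type*} {n : ℕ} (G : SimpleGraph T) (I : Set (Fin n → T))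
    (D D' : Fin n → T) : Prop :=
  D ∈ I ∧ D' ∈ I ∧ secretDiff G D D' ≠ ∅ ∧
    ¬ ∃ D'' ∈ I, secretDiff G D D'' ≠ ∅ ∧
      (secretDiff G D D'' ⊂ secretDiff G D D' ∨
        (secretDiff G D D'' = secretDiff G D D' ∧ totalDiff D D'' ⊂ totalDiff D D'))

/-! For any secret `(i, u, v)` in `sdiff(D, D')`, the database `D[i ↦ v]` is permissible when
`I` is unconstrained and differs from `D` only in that secret, so minimality forces both
differences of `D` and `D'` down to `{(i, u, v)}`. Conversely, a singleton secret difference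
can only shrink to `∅`, and a singleton total difference only to one with no secrets. -/

section

variable {T : Type*} {n : ℕ} (G : SimpleGraph T)

theorem secretDiff_subset_totalDiff (D D' : Fin n → T) :
    secretDiff G D D' ⊆ totalDiff D D' :=
  fun _ hx => hx.1

variable {G}

theorem totalDiff_update_self [DecidableEq (Fin n)] {D : Fin n → T} {i : Fin n} {v : T}
    (h : D i ≠ v) : totalDiff D (Function.update D i v) = {(i, D i, v)} := by
  ext ⟨j, a, b⟩
  simp only [totalDiff, Set.mem_ofPred_eq, Set.mem_singleton_iff, Prod.mk.injEq]
  by_cases hj : j = i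
  · subst hj
    simp only [Function.update_self]
    grind
  · simp only [Function.update_of_ne hj]
    grind

theorem secretDiff_update_self [DecidableEq (Fin n)] {D : Fin n → T} {i : Fin n} {v : T}
    (h : G.Adj (D i) v) : secretDiff G D (Function.update D i v) = {(i, D i, v)} := by
  ext x
  simp only [secretDiff, totalDiff_update_self h.ne, Set.mem_ofPred_eq,
    Set.mem_singleton_iff]
  constructor
  · exact And.left
  · rintro rfl
    exact ⟨rfl, h⟩

namespace BlowfishAdj

variable {I : Set (Fin n → T)} {D D' D'' : Fin n → T}

theorem secretDiff_eq_of_subset (hDD' : BlowfishAdj G I D D') (hD'' : D'' ∈ I)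
    (hne : secretDiff G D D'' ≠ ∅) (hsub : secretDiff G D D'' ⊆ secretDiff G D D') :
    secretDiff G D D'' = secretDiff G D D' := by
  by_contra hneq
  exact hDD'.2.2.2 ⟨D'', hD'', hne, Or.inl (hsub.ssubset_of_ne hneq)⟩

theorem totalDiff_eq_of_subset (hDD' : BlowfishAdj G I D D') (hD'' : D'' ∈ I)
    (hne : secretDiff G D D'' ≠ ∅) (hseq : secretDiff G D D'' = secretDiff G D D')
    (hsub : totalDiff D D'' ⊆ totalDiff D D') :
    totalDiff D D'' = totalDiff D D' := by
  by_contra hneq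
  exact hDD'.2.2.2 ⟨D'', hD'', hne, Or.inr ⟨hseq, hsub.ssubset_of_ne hneq⟩⟩

end BlowfishAdj

theorem blowfishAdj_of_totalDiff_eq_singleton {I : Set (Fin n → T)} {D D' : Fin n → T}
    {x : Fin n × T × T} (hD : D ∈ I) (hD' : D' ∈ I) (htd : totalDiff D D' = {x})
    (hsd : secretDiff G D D' = {x}) : BlowfishAdj G I D D' := by
  refine ⟨hD, hD', hsd ▸ Set.singleton_ne_empty x, ?_⟩
  rintro ⟨D'', -, hne, hlt | ⟨-, hlt⟩⟩
  · rw [hsd, Set.ssubset_singleton_iff] at hlt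
    exact hne hlt
  · rw [htd, Set.ssubset_singleton_iff] at hlt
    exact hne (Set.subset_empty_iff.mp (hlt ▸ secretDiff_subset_totalDiff G D D''))

end

theorem blowfishAdj_unconstrained_iff_general {T : Type*} (G : SimpleGraph T)
    (n : ℕ) (D D' : Fin n → T) :
    BlowfishAdj G (Set.univ : Set (Fin n → T)) D D' ↔
      ∃ (i : Fin n) (u v : T),
        totalDiff D D' = {(i, u, v)} ∧ secretDiff G D D' = {(i, u, v)} := by
  constructor
  · intro hDD'
    obtain ⟨⟨i, u, v⟩, hx⟩ := Set.nonempty_iff_ne_empty.mpr hDD'.2.2.1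
    obtain ⟨⟨rfl : D i = u, -, -⟩, hadj⟩ := id hx
    have hsd := secretDiff_update_self hadj
    have htd := totalDiff_update_self hadj.ne
    have hne : secretDiff G D (Function.update D i v) ≠ ∅ :=
      hsd ▸ Set.singleton_ne_empty _
    have hseq := hDD'.secretDiff_eq_of_subset (Set.mem_univ _) hne
      (by rw [hsd, Set.singleton_subset_iff]; exact hx)
    have hteq := hDD'.totalDiff_eq_of_subset (Set.mem_univ _) hne hseq
      (by rw [htd, Set.singleton_subset_iff]; exact hx.1)
    exact ⟨i, D i, v, hteq ▸ htd, hseq ▸ hsd⟩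
  · rintro ⟨i, u, v, htd, hsd⟩
    exact blowfishAdj_of_totalDiff_eq_singleton (Set.mem_univ D) (Set.mem_univ D') htd hsd

/-- If the set of permissible databases is unconstrained (`I = T^n`), then `D ∼ D'`
iff `tdiff(D,D') = sdiff(D,D') = {(i,u,v)}` for some index `i` and values `u,v`,
i.e. `D` and `D'` differ at exactly one index and the differing pair is a secret. -/
theorem blowfishAdj_unconstrained_iff {T : Type*} [Fintype T] (G : SimpleGraph T)
    (n : ℕ) (D D' : Fin n → T) :
    BlowfishAdj G (Set.univ : Set (Fin n → T)) D D' ↔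
      ∃ (i : Fin n) (u v : T),
        totalDiff D D' = {(i, u, v)} ∧ secretDiff G D D' = {(i, u, v)} :=
  blowfishAdj_unconstrained_iff_general G n D D'
end

section
/- Let K be an ℓ×p channel matrix satisfying (ε,G)-Blowfish privacy with respect to a simple graph G on the input set [ℓ]. Then there exists an ℓ×ℓ matrix K' such that: (a) K' is a channel matrix; (b) each column j ∈ [ℓ] of K' attains its maximum on the diagonal, i.e., K'_{j,j} = max_{i∈[ℓ]} K'_{i,j}; (c) K' satisfies (ε,G)-Blowfish privacy, i.e., K'_{i,j} ≤ e^{ε} K'_{h,j} for all i,j,h ∈ [ℓ] with i ∼ h in G; and (d) the sums of column maxima of K' and K coincide, Σ_{j=1}^{ℓ} max_{i} K'_{i,j} = Σ_{j=1}^{p} max_{i} K_{i,j}, so that the conditional min-entropies under the uniform input prior are equal. -/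
/-- Lemma (channel squaring): for any `ℓ × p` channel matrix `K` satisfying
`(ε, G)`-Blowfish privacy with respect to a simple graph `G` on `[ℓ]`, there exists an
`ℓ × ℓ` matrix `K'` such that (a) `K'` is a channel matrix; (b) each column of `K'`
attains its maximum on the diagonal; (c) `K'` satisfies `(ε, G)`-Blowfish privacy; and
(d) the sums of column maxima of `K'` and `K` coincide (hence the conditional
min-entropies under the uniform prior are equal). -/
theorem exists_square_channel_matrix (ε : ℝ) (hε : 0 < ε) (ℓ p : ℕ) (hℓ : 0 < ℓ)
    (G : SimpleGraph (Fin ℓ)) (K : Fin ℓ → Fin p → ℝ)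
    (hK0 : ∀ i j, 0 ≤ K i j)
    (hK1 : ∀ i, ∑ j, K i j = 1)
    (hBF : ∀ i h : Fin ℓ, G.Adj i h → ∀ j, K i j ≤ Real.exp ε * K h j) :
    ∃ K' : Fin ℓ → Fin ℓ → ℝ,
      (∀ i j, 0 ≤ K' i j) ∧ (∀ i, ∑ j, K' i j = 1) ∧
      (∀ j, K' j j = Finset.univ.sup' ⟨⟨0, hℓ⟩, Finset.mem_univ _⟩
        (fun i : Fin ℓ => K' i j)) ∧
      (∀ i h : Fin ℓ, G.Adj i h → ∀ j, K' i j ≤ Real.exp ε * K' h j) ∧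
      (∑ j, Finset.univ.sup' ⟨⟨0, hℓ⟩, Finset.mem_univ _⟩ (fun i : Fin ℓ => K' i j)
        = ∑ j : Fin p, Finset.univ.sup' ⟨⟨0, hℓ⟩, Finset.mem_univ _⟩
            (fun i : Fin ℓ => K i j)) := by
  have hne : (Finset.univ : Finset (Fin ℓ)).Nonempty := ⟨⟨0, hℓ⟩, Finset.mem_univ _⟩
  -- choose an argmax for each column j
  have hσ : ∀ j : Fin p, ∃ b : Fin ℓ,
      Finset.univ.sup' hne (fun i : Fin ℓ => K i j) = K b j := by
    intro j
    obtain ⟨b, _, hb⟩ := Finset.exists_mem_eq_sup' hne (fun i : Fin ℓ => K i j)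
    exact ⟨b, hb⟩
  choose σ hσ' using hσ
  set K' : Fin ℓ → Fin ℓ → ℝ :=
    fun i m => ∑ j ∈ Finset.univ.filter (fun j : Fin p => σ j = m), K i j with hK'
  have hle : ∀ i j, K i j ≤ K (σ j) j := fun i j =>
    (hσ' j) ▸ Finset.le_sup' (fun i : Fin ℓ => K i j) (Finset.mem_univ i)
  have hdiag : ∀ i m, K' i m ≤ K' m m := by
    intro i m
    refine Finset.sum_le_sum fun j hj => ?_
    have := (Finset.mem_filter.1 hj).2
    calc K i j ≤ K (σ j) j := hle i j
    _ = K m j := by rw [this]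
  refine ⟨K', fun i m => Finset.sum_nonneg fun j _ => hK0 i j, ?_, ?_, ?_, ?_⟩
  · intro i
    rw [hK']
    simp only
    rw [Finset.sum_fiberwise_of_maps_to (fun j _ => Finset.mem_univ (σ j))]
    exact hK1 i
  · intro m
    refine le_antisymm (Finset.le_sup' (fun i : Fin ℓ => K' i m) (Finset.mem_univ m)) ?_
    exact Finset.sup'_le hne _ fun i _ => hdiag i m
  · intro i h hadj m
    rw [hK']
    simp only
    rw [Finset.mul_sum]
    exact Finset.sum_le_sum fun j _ => hBF i h hadj j
  · have hcol : ∀ m : Fin ℓ,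
        Finset.univ.sup' hne (fun i : Fin ℓ => K' i m) = K' m m :=
      fun m => le_antisymm (Finset.sup'_le hne _ fun i _ => hdiag i m)
        (Finset.le_sup' (fun i : Fin ℓ => K' i m) (Finset.mem_univ m))
    calc ∑ m, Finset.univ.sup' hne (fun i : Fin ℓ => K' i m)
        = ∑ m, K' m m := Finset.sum_congr rfl fun m _ => hcol m
      _ = ∑ m, ∑ j ∈ Finset.univ.filter (fun j : Fin p => σ j = m), K (σ j) j := by
          refine Finset.sum_congr rfl fun m _ => Finset.sum_congr rfl fun j hj => ?_
          rw [(Finset.mem_filter.1 hj).2]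
      _ = ∑ j : Fin p, K (σ j) j :=
          Finset.sum_fiberwise_of_maps_to (fun j _ => Finset.mem_univ (σ j)) _
      _ = ∑ j : Fin p, Finset.univ.sup' hne (fun i : Fin ℓ => K i j) :=
          Finset.sum_congr rfl fun j _ => (hσ' j).symm
end

section
/- Let ε > 0, let G be a simple graph on the input set [ℓ] with connected components X^{(1)},…,X^{(q)}, and for each t ∈ [q] let d_t = max_{i,j ∈ X^{(t)}} dist_G(i,j) be the diameter of the t-th component. Let K be an ℓ×p channel matrix satisfying (ε,G)-Blowfish privacy. Then the sum of column maxima satisfies Σ_{j=1}^{p} max_{i∈[ℓ]} K_{i,j} ≤ Σ_{t=1}^{q} exp(ε d_t); equivalently, if the input X is uniformly distributed on [ℓ], the conditional min-entropy satisfies H_∞(X|Z) ≥ −log( (1/ℓ) Σ_{t=1}^{q} exp(ε d_t) ). -/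
/-- Theorem 2 (min-entropy of Blowfish-private mechanisms): let `G` be a simple graph
on the input set `[ℓ]` whose connected components are `X^{(1)}, …, X^{(q)}` with
diameters `d_1, …, d_q`. If the `ℓ × p` channel matrix `K` satisfies `(ε, G)`-Blowfish
privacy, then the sum of the column maxima of `K` is at most `∑_t exp(ε d_t)`;
equivalently, under the uniform input prior,
`H_∞(X|Z) = -log((1/ℓ) ∑_j max_i K_{i,j}) ≥ -log((1/ℓ) ∑_t exp(ε d_t))`. -/
theorem minEntropy_of_blowfish (ε : ℝ) (hε : 0 < ε) (ℓ p q : ℕ) (hℓ : 0 < ℓ)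
    (G : SimpleGraph (Fin ℓ))
    (X : Fin q → Set (Fin ℓ))
    (hcover : ∀ i, ∃ t, i ∈ X t)
    (hdisj : ∀ t s, t ≠ s → Disjoint (X t) (X s))
    (hXne : ∀ t, (X t).Nonempty)
    (hreach : ∀ i j : Fin ℓ, (∃ t, i ∈ X t ∧ j ∈ X t) ↔ G.Reachable i j)
    (d : Fin q → ℕ)
    (hd_ub : ∀ t, ∀ i ∈ X t, ∀ j ∈ X t, G.dist i j ≤ d t)
    (hd_att : ∀ t, ∃ i ∈ X t, ∃ j ∈ X t, G.dist i j = d t)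
    (K : Fin ℓ → Fin p → ℝ)
    (hK0 : ∀ i j, 0 ≤ K i j) (hK1 : ∀ i, ∑ j, K i j = 1)
    (hBF : ∀ i h : Fin ℓ, G.Adj i h → ∀ j, K i j ≤ Real.exp ε * K h j) :
    (∑ j, Finset.univ.sup' ⟨⟨0, hℓ⟩, Finset.mem_univ _⟩ (fun i : Fin ℓ => K i j)
        ≤ ∑ t, Real.exp (ε * d t)) ∧
      -Real.log ((1 / (ℓ : ℝ)) * ∑ j, Finset.univ.sup' ⟨⟨0, hℓ⟩, Finset.mem_univ _⟩
          (fun i : Fin ℓ => K i j))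
        ≥ -Real.log ((1 / (ℓ : ℝ)) * ∑ t, Real.exp (ε * d t)) := by
  classical
  have hwalk : ∀ {i h : Fin ℓ} (w : G.Walk i h) (j : Fin p),
      K i j ≤ Real.exp (ε * w.length) * K h j := by
    intro i h w j
    induction w with
    | nil => simp
    | @cons a b c adj w ih =>
      calc K a j ≤ Real.exp ε * K b j := hBF _ _ adj j
        _ ≤ Real.exp ε * (Real.exp (ε * w.length) * K c j) :=
            mul_le_mul_of_nonneg_left ih (Real.exp_pos ε).le
        _ = Real.exp (ε * (SimpleGraph.Walk.cons adj w).length) * K c j := by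
            rw [← mul_assoc, ← Real.exp_add, SimpleGraph.Walk.length_cons]
            push_cast
            ring_nf
  have hdist : ∀ i hh : Fin ℓ, G.Reachable i hh → ∀ j,
      K i j ≤ Real.exp (ε * G.dist i hh) * K hh j := by
    intro i hh hr j
    obtain ⟨w, hw⟩ := hr.exists_walk_length_eq_dist
    simpa [hw] using hwalk w j
  choose c hc using hXne
  have step : ∀ j, Finset.univ.sup' ⟨⟨0, hℓ⟩, Finset.mem_univ _⟩ (fun i : Fin ℓ => K i j)
      ≤ ∑ t, Real.exp (ε * d t) * K (c t) j := by
    intro j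
    apply Finset.sup'_le
    intro i _
    obtain ⟨t, hit⟩ := hcover i
    have hr : G.Reachable i (c t) := (hreach i (c t)).1 ⟨t, hit, hc t⟩
    have h1 : K i j ≤ Real.exp (ε * d t) * K (c t) j := by
      refine (hdist i (c t) hr j).trans ?_
      apply mul_le_mul_of_nonneg_right _ (hK0 _ _)
      apply Real.exp_le_exp.2
      apply mul_le_mul_of_nonneg_left _ hε.le
      exact_mod_cast hd_ub t i hit (c t) (hc t)
    refine h1.trans ?_
    exact Finset.single_le_sum (f := fun t => Real.exp (ε * d t) * K (c t) j)
      (fun t _ => mul_nonneg (Real.exp_pos _).le (hK0 _ _)) (Finset.mem_univ t)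
  have key : ∑ j, Finset.univ.sup' ⟨⟨0, hℓ⟩, Finset.mem_univ _⟩ (fun i : Fin ℓ => K i j)
      ≤ ∑ t, Real.exp (ε * d t) := by
    calc ∑ j, Finset.univ.sup' ⟨⟨0, hℓ⟩, Finset.mem_univ _⟩ (fun i : Fin ℓ => K i j)
        ≤ ∑ j, ∑ t, Real.exp (ε * d t) * K (c t) j :=
          Finset.sum_le_sum (fun j _ => step j)
      _ = ∑ t, Real.exp (ε * d t) * ∑ j, K (c t) j := by
          rw [Finset.sum_comm]; simp [Finset.mul_sum]
      _ = ∑ t, Real.exp (ε * d t) := by simp [hK1]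
  refine ⟨key, ?_⟩
  have hS1 : (1 : ℝ) ≤ ∑ j, Finset.univ.sup' ⟨⟨0, hℓ⟩, Finset.mem_univ _⟩
      (fun i : Fin ℓ => K i j) := by
    calc (1 : ℝ) = ∑ j, K ⟨0, hℓ⟩ j := (hK1 _).symm
      _ ≤ _ := Finset.sum_le_sum (fun j _ =>
          Finset.le_sup' (fun i : Fin ℓ => K i j) (Finset.mem_univ ⟨0, hℓ⟩))
  have hℓpos : (0 : ℝ) < 1 / (ℓ : ℝ) := by positivity
  have ha : (0 : ℝ) < (1 / (ℓ : ℝ)) * ∑ j, Finset.univ.sup' ⟨⟨0, hℓ⟩, Finset.mem_univ _⟩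
      (fun i : Fin ℓ => K i j) := by
    have : (0:ℝ) < ∑ j, Finset.univ.sup' ⟨⟨0, hℓ⟩, Finset.mem_univ _⟩
      (fun i : Fin ℓ => K i j) := lt_of_lt_of_le one_pos hS1
    positivity
  have hab := mul_le_mul_of_nonneg_left key hℓpos.le
  have := Real.log_le_log ha hab
  linarith
end

section
/- Let ε > 0, let G be a simple graph on the input set [ℓ] with connected components X^{(1)},…,X^{(q)} having diameters d_1,…,d_q, and let K be an ℓ×p channel matrix satisfying (ε,G)-Blowfish privacy. Then for every prior distribution π on [ℓ], Σ_{j=1}^{p} max_{i∈[ℓ]} π_i K_{i,j} ≤ (max_{i∈[ℓ]} π_i) · Σ_{t=1}^{q} exp(ε d_t); equivalently, the min-entropy leakage satisfies I_∞(X;Z) = log( V(X|Z)/V(X) ) ≤ log( Σ_{t=1}^{q} exp(ε d_t) ) for any distribution of the input X. -/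
private lemma walk_bound {ℓ p : ℕ} {G : SimpleGraph (Fin ℓ)} {K : Fin ℓ → Fin p → ℝ}
    (hK0 : ∀ i j, 0 ≤ K i j) {ε : ℝ}
    (hBF : ∀ i h : Fin ℓ, G.Adj i h → ∀ j, K i j ≤ Real.exp ε * K h j)
    {i a : Fin ℓ} (w : G.Walk i a) (j : Fin p) :
    K i j ≤ Real.exp (ε * w.length) * K a j := by
  induction w with
  | nil => simp
  | @cons u v c hadj w ih =>
      calc K u j ≤ Real.exp ε * K v j := hBF u v hadj j
        _ ≤ Real.exp ε * (Real.exp (ε * w.length) * K c j) := by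
            exact mul_le_mul_of_nonneg_left ih (le_of_lt (Real.exp_pos ε))
        _ = Real.exp (ε * (w.cons hadj).length) * K c j := by
            rw [SimpleGraph.Walk.length_cons, ← mul_assoc, ← Real.exp_add]
            push_cast; ring_nf

/-- Main Theorem (information leakage of Blowfish-private mechanisms): let `G` be a
simple graph on `[ℓ]` whose connected components `X^{(1)}, …, X^{(q)}` have diameters
`d_1, …, d_q`, and let `K` be an `ℓ × p` channel matrix satisfying `(ε, G)`-Blowfish
privacy. Then for every prior `π` on `[ℓ]`,
`V(X|Z) = ∑_j max_i π_i K_{i,j} ≤ (max_i π_i) ∑_t exp(ε d_t)`; equivalently the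
min-entropy leakage satisfies `I_∞(X;Z) = log(V(X|Z)/V(X)) ≤ log(∑_t exp(ε d_t))`. -/
theorem leakage_of_blowfish (ε : ℝ) (hε : 0 < ε) (ℓ p q : ℕ) (hℓ : 0 < ℓ)
    (G : SimpleGraph (Fin ℓ))
    (X : Fin q → Set (Fin ℓ))
    (hcover : ∀ i, ∃ t, i ∈ X t)
    (hdisj : ∀ t s, t ≠ s → Disjoint (X t) (X s))
    (hXne : ∀ t, (X t).Nonempty)
    (hreach : ∀ i j : Fin ℓ, (∃ t, i ∈ X t ∧ j ∈ X t) ↔ G.Reachable i j)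
    (d : Fin q → ℕ)
    (hd_ub : ∀ t, ∀ i ∈ X t, ∀ j ∈ X t, G.dist i j ≤ d t)
    (hd_att : ∀ t, ∃ i ∈ X t, ∃ j ∈ X t, G.dist i j = d t)
    (K : Fin ℓ → Fin p → ℝ)
    (hK0 : ∀ i j, 0 ≤ K i j) (hK1 : ∀ i, ∑ j, K i j = 1)
    (hBF : ∀ i h : Fin ℓ, G.Adj i h → ∀ j, K i j ≤ Real.exp ε * K h j)
    (π : Fin ℓ → ℝ) (hπ0 : ∀ i, 0 ≤ π i) (hπ1 : ∑ i, π i = 1) :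
    (∑ j, Finset.univ.sup' ⟨⟨0, hℓ⟩, Finset.mem_univ _⟩
          (fun i : Fin ℓ => π i * K i j)
        ≤ (Finset.univ.sup' ⟨⟨0, hℓ⟩, Finset.mem_univ _⟩ (fun i : Fin ℓ => π i))
          * ∑ t, Real.exp (ε * d t)) ∧
      Real.log ((∑ j, Finset.univ.sup' ⟨⟨0, hℓ⟩, Finset.mem_univ _⟩
            (fun i : Fin ℓ => π i * K i j))
          / Finset.univ.sup' ⟨⟨0, hℓ⟩, Finset.mem_univ _⟩ (fun i : Fin ℓ => π i))
        ≤ Real.log (∑ t, Real.exp (ε * d t)) := by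

  classical
  set V : ℝ := Finset.univ.sup' ⟨⟨0, hℓ⟩, Finset.mem_univ _⟩ (fun i : Fin ℓ => π i) with hV
  -- some i0 with π i0 > 0
  have hi0 : ∃ i0 : Fin ℓ, 0 < π i0 := by
    by_contra hc
    push_neg at hc
    have : ∀ i : Fin ℓ, π i = 0 := fun i => le_antisymm (hc i) (hπ0 i)
    simp [this] at hπ1
  obtain ⟨i0, hi0⟩ := hi0
  have hVpos : 0 < V := lt_of_lt_of_le hi0 (Finset.le_sup' _ (Finset.mem_univ i0))
  -- representative of each component
  have arep : ∀ t : Fin q, ∃ a, a ∈ X t := fun t => hXne t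
  choose a ha using arep
  -- key pointwise bound
  have key : ∀ (j : Fin p) (i : Fin ℓ),
      π i * K i j ≤ V * ∑ t, Real.exp (ε * d t) * K (a t) j := by
    intro j i
    obtain ⟨t, hit⟩ := hcover i
    have hre : G.Reachable i (a t) := (hreach i (a t)).mp ⟨t, hit, ha t⟩
    obtain ⟨w, hw⟩ := hre.exists_walk_length_eq_dist
    have h1 : K i j ≤ Real.exp (ε * d t) * K (a t) j := by
      refine le_trans (walk_bound hK0 hBF w j) ?_
      apply mul_le_mul_of_nonneg_right _ (hK0 _ _)
      apply Real.exp_le_exp.mpr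
      apply mul_le_mul_of_nonneg_left _ (le_of_lt hε)
      exact_mod_cast hw ▸ (Nat.cast_le.mpr (hd_ub t i hit (a t) (ha t)))
    have h2 : Real.exp (ε * d t) * K (a t) j ≤ ∑ s, Real.exp (ε * d s) * K (a s) j := by
      apply Finset.single_le_sum (f := fun s => Real.exp (ε * d s) * K (a s) j)
        (fun s _ => mul_nonneg (Real.exp_pos _).le (hK0 _ _)) (Finset.mem_univ t)
    calc π i * K i j ≤ V * K i j :=
          mul_le_mul_of_nonneg_right (Finset.le_sup' _ (Finset.mem_univ i)) (hK0 _ _)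
      _ ≤ V * ∑ s, Real.exp (ε * d s) * K (a s) j :=
          mul_le_mul_of_nonneg_left (le_trans h1 h2) hVpos.le
  have main : (∑ j, Finset.univ.sup' ⟨⟨0, hℓ⟩, Finset.mem_univ _⟩
      (fun i : Fin ℓ => π i * K i j)) ≤ V * ∑ t, Real.exp (ε * d t) := by
    calc (∑ j, Finset.univ.sup' ⟨⟨0, hℓ⟩, Finset.mem_univ _⟩
        (fun i : Fin ℓ => π i * K i j))
        ≤ ∑ j, V * ∑ t, Real.exp (ε * d t) * K (a t) j := by
          apply Finset.sum_le_sum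
          intro j _
          exact Finset.sup'_le _ _ (fun i _ => key j i)
      _ = V * ∑ t, Real.exp (ε * d t) * ∑ j, K (a t) j := by
          rw [← Finset.mul_sum, Finset.sum_comm]
          congr 1
          exact Finset.sum_congr rfl (fun t _ => by rw [Finset.mul_sum])
      _ = V * ∑ t, Real.exp (ε * d t) := by
          congr 1
          exact Finset.sum_congr rfl (fun t _ => by rw [hK1 (a t), mul_one])
  refine ⟨main, ?_⟩
  have hApos : 0 < ∑ j, Finset.univ.sup' ⟨⟨0, hℓ⟩, Finset.mem_univ _⟩
      (fun i : Fin ℓ => π i * K i j) := by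
    have : (0:ℝ) < ∑ j, π i0 * K i0 j := by
      rw [← Finset.mul_sum, hK1 i0, mul_one]; exact hi0
    refine lt_of_lt_of_le this (Finset.sum_le_sum fun j _ => ?_)
    exact Finset.le_sup' (fun i : Fin ℓ => π i * K i j) (Finset.mem_univ i0)
  have hdiv : (∑ j, Finset.univ.sup' ⟨⟨0, hℓ⟩, Finset.mem_univ _⟩
      (fun i : Fin ℓ => π i * K i j)) / V ≤ ∑ t, Real.exp (ε * d t) :=
    (div_le_iff₀ hVpos).mpr (by linarith [main])
  exact Real.log_le_log (div_pos hApos hVpos) hdiv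
end

section
/- Let ε > 0, let G be a connected simple graph on the input set [ℓ] with diameter d = max_{i,j∈[ℓ]} dist_G(i,j), and let K be an ℓ×p channel matrix satisfying (ε,G)-Blowfish privacy. Then for every prior distribution π on [ℓ], the min-entropy leakage satisfies I_∞(X;Z) = log( V(X|Z)/V(X) ) ≤ ε d. -/
/-! Along a shortest path from `i` to any fixed input `v`, Blowfish privacy loses a factor `e^ε`
per edge, so every row of `K` is dominated by `e^{εd}` times row `v`. Hence each column maximum
`max_i π_i K_{i,j}` is at most `V(X) e^{εd} K_{v,j}`, and summing over the outputs gives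
`V(X|Z) ≤ e^{εd} V(X)`. -/

open Finset

namespace SimpleGraph

variable {V ι : Type*} {G : SimpleGraph V} {K : V → ι → ℝ} {ε : ℝ}

theorem Walk.le_exp_mul_length_mul_of_adj_le
    (hBF : ∀ i h, G.Adj i h → ∀ j, K i j ≤ Real.exp ε * K h j) {i h : V} (w : G.Walk i h)
    (j : ι) :
    K i j ≤ Real.exp (ε * w.length) * K h j := by
  induction w with
  | nil => simp
  | @cons a b c hab w ih =>
    calc K a j ≤ Real.exp ε * K b j := hBF a b hab j
      _ ≤ Real.exp ε * (Real.exp (ε * w.length) * K c j) := by gcongr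
      _ = Real.exp (ε * (w.cons hab).length) * K c j := by
        rw [← mul_assoc, ← Real.exp_add, Walk.length_cons]
        push_cast
        ring_nf

theorem Connected.le_exp_mul_mul_of_dist_le (hconn : G.Connected) (hε : 0 ≤ ε)
    (hK0 : ∀ i j, 0 ≤ K i j) (hBF : ∀ i h, G.Adj i h → ∀ j, K i j ≤ Real.exp ε * K h j)
    {d : ℕ} {i h : V} (hd : G.dist i h ≤ d) (j : ι) :
    K i j ≤ Real.exp (ε * d) * K h j := by
  obtain ⟨w, hw⟩ := (hconn.preconnected i h).exists_walk_length_eq_dist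
  calc K i j ≤ Real.exp (ε * w.length) * K h j := w.le_exp_mul_length_mul_of_adj_le hBF j
    _ ≤ Real.exp (ε * d) * K h j := by
      gcongr
      · exact hK0 h j
      · exact_mod_cast hw ▸ hd

end SimpleGraph

theorem sum_sup'_mul_le_of_le_mul {ι κ : Type*} [Fintype ι] [Fintype κ]
    (hne : (univ : Finset ι).Nonempty) (π : ι → ℝ) (hπ0 : ∀ i, 0 ≤ π i)
    (K : ι → κ → ℝ) (hK0 : ∀ i j, 0 ≤ K i j) (v : ι) (hKv : ∑ j, K v j = 1) {c : ℝ}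
    (hc : ∀ i j, K i j ≤ c * K v j) :
    ∑ j, univ.sup' hne (fun i => π i * K i j) ≤ c * univ.sup' hne π := by
  have hπM : ∀ i, π i ≤ univ.sup' hne π := fun i => le_sup' π (mem_univ i)
  calc ∑ j, univ.sup' hne (fun i => π i * K i j)
      ≤ ∑ j, univ.sup' hne π * (c * K v j) :=
        sum_le_sum fun j _ => sup'_le _ _ fun i _ =>
          mul_le_mul (hπM i) (hc i j) (hK0 i j) ((hπ0 i).trans (hπM i))
    _ = c * univ.sup' hne π := by rw [← mul_sum, ← mul_sum, hKv]; ring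

theorem Real.log_le_of_le_exp {x y : ℝ} (hx : 0 ≤ x) (hy : 0 ≤ y) (h : x ≤ Real.exp y) :
    Real.log x ≤ y := by
  rcases hx.eq_or_lt with rfl | hx
  · simpa using hy
  · exact (Real.log_le_iff_le_exp hx).2 h

theorem leakage_of_blowfish_connected_general (ε : ℝ) (hε : 0 < ε) (ℓ p : ℕ) (hℓ : 0 < ℓ)
    (G : SimpleGraph (Fin ℓ)) (hconn : G.Connected)
    (d : ℕ)
    (hd_ub : ∀ i j : Fin ℓ, G.dist i j ≤ d)
    (K : Fin ℓ → Fin p → ℝ)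
    (hK0 : ∀ i j, 0 ≤ K i j) (hK1 : ∀ i, ∑ j, K i j = 1)
    (hBF : ∀ i h : Fin ℓ, G.Adj i h → ∀ j, K i j ≤ Real.exp ε * K h j)
    (π : Fin ℓ → ℝ) (hπ0 : ∀ i, 0 ≤ π i) :
    Real.log ((∑ j, Finset.univ.sup' ⟨⟨0, hℓ⟩, Finset.mem_univ _⟩
          (fun i : Fin ℓ => π i * K i j))
        / Finset.univ.sup' ⟨⟨0, hℓ⟩, Finset.mem_univ _⟩ (fun i : Fin ℓ => π i))
      ≤ ε * d := by
  set v : Fin ℓ := ⟨0, hℓ⟩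
  have hV : 0 ≤ univ.sup' ⟨v, mem_univ _⟩ π := le_sup'_of_le π (mem_univ v) (hπ0 v)
  have hVZ : 0 ≤ ∑ j, univ.sup' ⟨v, mem_univ _⟩ (fun i => π i * K i j) :=
    sum_nonneg fun j _ => le_sup'_of_le _ (mem_univ v) (mul_nonneg (hπ0 v) (hK0 v j))
  have hVZ_le := sum_sup'_mul_le_of_le_mul ⟨v, mem_univ _⟩ π hπ0 K hK0 v (hK1 v)
    fun i j => hconn.le_exp_mul_mul_of_dist_le hε.le hK0 hBF (hd_ub i v) j
  exact Real.log_le_of_le_exp (div_nonneg hVZ hV) (by positivity)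
    (div_le_of_le_mul₀ hV (Real.exp_nonneg _) hVZ_le)

/-- Connected-graph case of the main bound: if `G` is a connected simple graph on `[ℓ]`
with diameter `d = max_{i,j} dist_G(i,j)` and `K` is an `ℓ × p` channel matrix
satisfying `(ε, G)`-Blowfish privacy, then for every prior `π` on `[ℓ]` the
min-entropy leakage satisfies `I_∞(X;Z) = log(V(X|Z)/V(X)) ≤ ε d`. -/
theorem leakage_of_blowfish_connected (ε : ℝ) (hε : 0 < ε) (ℓ p : ℕ) (hℓ : 0 < ℓ)
    (G : SimpleGraph (Fin ℓ)) (hconn : G.Connected)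
    (d : ℕ)
    (hd_ub : ∀ i j : Fin ℓ, G.dist i j ≤ d)
    (hd_att : ∃ i j : Fin ℓ, G.dist i j = d)
    (K : Fin ℓ → Fin p → ℝ)
    (hK0 : ∀ i j, 0 ≤ K i j) (hK1 : ∀ i, ∑ j, K i j = 1)
    (hBF : ∀ i h : Fin ℓ, G.Adj i h → ∀ j, K i j ≤ Real.exp ε * K h j)
    (π : Fin ℓ → ℝ) (hπ0 : ∀ i, 0 ≤ π i) (hπ1 : ∑ i, π i = 1) :
    Real.log ((∑ j, Finset.univ.sup' ⟨⟨0, hℓ⟩, Finset.mem_univ _⟩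
          (fun i : Fin ℓ => π i * K i j))
        / Finset.univ.sup' ⟨⟨0, hℓ⟩, Finset.mem_univ _⟩ (fun i : Fin ℓ => π i))
      ≤ ε * d :=
  leakage_of_blowfish_connected_general ε hε ℓ p hℓ G hconn d hd_ub K hK0 hK1 hBF π hπ0
end

section
/- Fix an integer n > 1 and a real δ > 0, and let G be the simple graph on vertex set {x_1,…,x_{2n+2}} whose edge set makes {x_1,x_2,x_3,x_4} a complete component and makes each pair {x_{2t+3}, x_{2t+4}} for t = 1,…,n−1 a complete two-vertex component (so G has q = n connected components, each of diameter 1). Let K^{(δ)} be the (2n+2)×(2n+2) block-diagonal matrix with all entries divided by 4+2δ, whose top-left 4×4 block has rows (1+δ, 1+δ, 1, 1), (1, 1+δ, 1+δ, 1), (1, 1, 1+δ, 1+δ), (1+δ, 1, 1, 1+δ), whose remaining n−1 diagonal 2×2 blocks each equal ((2+2δ, 2),(2, 2+2δ)), and which is zero elsewhere. Then: (i) K^{(δ)} is a channel matrix; (ii) K^{(δ)} satisfies (ε(δ),G)-Blowfish privacy with ε(δ) = log(1+δ); and (iii) under the uniform input prior its min-entropy leakage equals I_∞(X; K^{(δ)}(X))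 = log( (4(1+δ) + (2n−2)(2+2δ)) / (4+2δ) ). -/
/-- The graph of the tightness construction on `2n+2` vertices: vertices `0,1,2,3`
form a complete connected component, and for each `t = 1, …, n-1` the pair
`{2t+2, 2t+3}` forms a complete two-vertex component (so there are `n` connected
components, each of diameter 1). -/
def tightnessGraph (n : ℕ) : SimpleGraph (Fin (2 * n + 2)) where
  Adj i j := i ≠ j ∧
    ((i.val < 4 ∧ j.val < 4) ∨ (4 ≤ i.val ∧ 4 ≤ j.val ∧ i.val / 2 = j.val / 2))
  symm := by
    constructor
    rintro i j ⟨hij, h⟩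
    refine ⟨hij.symm, ?_⟩
    rcases h with ⟨h1, h2⟩ | ⟨h1, h2, h3⟩
    · exact Or.inl ⟨h2, h1⟩
    · exact Or.inr ⟨h2, h1, h3.symm⟩
  loopless := ⟨fun i h => h.1 rfl⟩

/-- The channel matrix of the tightness construction: a block-diagonal matrix whose
top-left `4×4` block has rows `(1+δ,1+δ,1,1)`, `(1,1+δ,1+δ,1)`, `(1,1,1+δ,1+δ)`,
`(1+δ,1,1,1+δ)`, whose remaining `n-1` diagonal `2×2` blocks equal
`((2+2δ, 2), (2, 2+2δ))`, which is zero elsewhere, and all of whose entries are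
divided by `4+2δ`. -/
noncomputable def tightnessMatrix (n : ℕ) (δ : ℝ) :
    Fin (2 * n + 2) → Fin (2 * n + 2) → ℝ := fun i j =>
  (if i.val < 4 ∧ j.val < 4 then
      (if j.val = i.val ∨ j.val = (i.val + 1) % 4 then 1 + δ else 1)
    else if 4 ≤ i.val ∧ 4 ≤ j.val ∧ i.val / 2 = j.val / 2 then
      (if i = j then 2 + 2 * δ else 2)
    else 0) / (4 + 2 * δ)

/-!
`K^{(δ)}` is block diagonal with one `4×4` block and `n - 1` blocks of size two, and the block of a
vertex is its connected component in `G`. Every row of a block sums to `4 + 2δ`; within a block all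
entries lie between `c` and `(1 + δ) c` (with `c = 1`, resp. `c = 2`), which bounds the ratio of two
adjacent rows; and every column attains its maximum on the diagonal, so the leakage is the log of
the trace.
-/

theorem Fin.sum_eq_sum_castLE {M : Type*} [AddCommMonoid M] {k m : ℕ} (hkm : k ≤ m)
    (f : Fin m → M) (hf : ∀ j : Fin m, k ≤ j.val → f j = 0) :
    ∑ j, f j = ∑ i : Fin k, f (i.castLE hkm) := by
  obtain ⟨d, rfl⟩ := Nat.exists_eq_add_of_le hkm
  exact Fin.sum_trunc f fun j => hf _ (by simp)

theorem Fin.sum_ite_val_lt {M : Type*} [AddCommMonoid M] {k m : ℕ} (hkm : k ≤ m) (a b : M) :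
    ∑ j : Fin m, (if j.val < k then a else b) = k • a + (m - k) • b := by
  have hcard :=
    Finset.card_filter_add_card_filter_not (s := Finset.univ) (fun j : Fin m => j.val < k)
  rw [Fin.card_filter_val_lt, min_eq_right hkm, Finset.card_univ, Fintype.card_fin] at hcard
  rw [Finset.sum_ite, Finset.sum_const, Finset.sum_const, Fin.card_filter_val_lt, min_eq_right hkm]
  congr
  omega


section

variable {n : ℕ} {δ : ℝ}

theorem tightnessMatrix_nonneg (hδ : 0 ≤ δ) (i j : Fin (2 * n + 2)) :
    0 ≤ tightnessMatrix n δ i j := by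
  unfold tightnessMatrix
  apply div_nonneg _ (by linarith)
  split_ifs <;> linarith

theorem tightnessMatrix_eq_zero {i j : Fin (2 * n + 2)} (h₁ : ¬ (i.val < 4 ∧ j.val < 4))
    (h₂ : ¬ (4 ≤ i.val ∧ 4 ≤ j.val ∧ i.val / 2 = j.val / 2)) : tightnessMatrix n δ i j = 0 := by
  simp only [tightnessMatrix, if_neg h₁, if_neg h₂, zero_div]

theorem tightnessMatrix_of_four_le {i j : Fin (2 * n + 2)} (hi : 4 ≤ i.val) (hj : 4 ≤ j.val)
    (hij : i.val / 2 = j.val / 2) :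
    tightnessMatrix n δ i j = (if i = j then 2 + 2 * δ else 2) / (4 + 2 * δ) := by
  simp only [tightnessMatrix, if_neg (show ¬ (i.val < 4 ∧ j.val < 4) by omega),
    if_pos (And.intro hi (And.intro hj hij))]

theorem sum_tightnessMatrix_of_lt_four (hn : 1 ≤ n) (hδ : 0 ≤ δ) {i : Fin (2 * n + 2)}
    (hi : i.val < 4) : ∑ j, tightnessMatrix n δ i j = 1 := by
  rw [Fin.sum_eq_sum_castLE (by omega : 4 ≤ 2 * n + 2) _
    fun j hj => tightnessMatrix_eq_zero (by omega) (by omega), Fin.sum_univ_four]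
  obtain ⟨k, hk⟩ := i
  have : 4 + 2 * δ ≠ 0 := by linarith
  interval_cases k <;> simp [tightnessMatrix] <;> field_simp <;> ring

theorem sum_tightnessMatrix_of_four_le (hδ : 0 ≤ δ) {i : Fin (2 * n + 2)}
    (hi : 4 ≤ i.val) : ∑ j, tightnessMatrix n δ i j = 1 := by
  -- `p` is the other vertex of the two-element block of `i`
  set p : Fin (2 * n + 2) := ⟨i.val + 1 - 2 * (i.val % 2), by omega⟩
  have hp : p.val = i.val + 1 - 2 * (i.val % 2) := rfl
  have hip : i ≠ p := by rw [Ne, Fin.ext_iff]; omega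
  rw [Fintype.sum_eq_add i p hip fun j hj => tightnessMatrix_eq_zero (by omega) ?_,
    tightnessMatrix_of_four_le hi hi rfl, tightnessMatrix_of_four_le hi (by omega) (by omega),
    if_pos rfl, if_neg hip, ← add_div, div_eq_one_iff_eq (by linarith)]
  · ring
  · rw [Ne, Fin.ext_iff, Ne, Fin.ext_iff] at hj
    omega

theorem sum_tightnessMatrix (hn : 1 ≤ n) (hδ : 0 ≤ δ) (i : Fin (2 * n + 2)) :
    ∑ j, tightnessMatrix n δ i j = 1 :=
  (lt_or_ge i.val 4).elim (sum_tightnessMatrix_of_lt_four hn hδ)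
    (sum_tightnessMatrix_of_four_le hδ)

theorem tightnessMatrix_le_one_add_mul_of_adj (hδ : 0 ≤ δ) {i h : Fin (2 * n + 2)}
    (hih : (tightnessGraph n).Adj i h) (j : Fin (2 * n + 2)) :
    tightnessMatrix n δ i j ≤ (1 + δ) * tightnessMatrix n δ h j := by
  obtain ⟨-, hih⟩ := hih
  unfold tightnessMatrix
  rw [← mul_div_assoc]
  apply div_le_div_of_nonneg_right _ (by linarith)
  split_ifs <;> first | omega | nlinarith

theorem tightnessMatrix_le_self (hδ : 0 ≤ δ) (i j : Fin (2 * n + 2)) :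
    tightnessMatrix n δ i j ≤ tightnessMatrix n δ j j := by
  unfold tightnessMatrix
  apply div_le_div_of_nonneg_right _ (by linarith)
  split_ifs <;> first | omega | linarith

theorem tightnessMatrix_self (j : Fin (2 * n + 2)) :
    tightnessMatrix n δ j j = (if j.val < 4 then 1 + δ else 2 + 2 * δ) / (4 + 2 * δ) := by
  by_cases hj : j.val < 4
  · simp [tightnessMatrix, hj]
  · simp [tightnessMatrix, hj, show 4 ≤ j.val by omega]

theorem sup'_tightnessMatrix_eq_self (hδ : 0 ≤ δ)
    (H : (Finset.univ : Finset (Fin (2 * n + 2))).Nonempty) (j : Fin (2 * n + 2)) :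
    Finset.univ.sup' H (fun i => tightnessMatrix n δ i j) = tightnessMatrix n δ j j :=
  le_antisymm (Finset.sup'_le _ _ fun i _ => tightnessMatrix_le_self hδ i j)
    (Finset.le_sup' (fun i => tightnessMatrix n δ i j) (Finset.mem_univ j))

theorem sum_tightnessMatrix_self (hn : 1 ≤ n) :
    ∑ j, tightnessMatrix n δ j j
      = (4 * (1 + δ) + (2 * (n : ℝ) - 2) * (2 + 2 * δ)) / (4 + 2 * δ) := by
  simp_rw [tightnessMatrix_self, ← Finset.sum_div, Fin.sum_ite_val_lt (by omega : 4 ≤ 2 * n + 2),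
    nsmul_eq_mul, Nat.cast_sub (by omega : 4 ≤ 2 * n + 2)]
  push_cast
  ring

end

/-- Properties of the tightness construction: for `n > 1` and `δ > 0`,
(i) `K^{(δ)}` is a channel matrix; (ii) `K^{(δ)}` satisfies
`(ε(δ), G)`-Blowfish privacy with `ε(δ) = log(1+δ)` for the `n`-component graph `G`;
and (iii) the min-entropy leakage under the uniform prior,
`log(∑_j max_i K_{i,j})`, equals `log((4(1+δ) + (2n-2)(2+2δ)) / (4+2δ))`. -/
theorem tightness_construction (n : ℕ) (hn : 1 < n) (δ : ℝ) (hδ : 0 < δ) :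
    (∀ i j, 0 ≤ tightnessMatrix n δ i j) ∧
      (∀ i, ∑ j, tightnessMatrix n δ i j = 1) ∧
      (∀ i h : Fin (2 * n + 2), (tightnessGraph n).Adj i h →
        ∀ j, tightnessMatrix n δ i j
          ≤ Real.exp (Real.log (1 + δ)) * tightnessMatrix n δ h j) ∧
      Real.log (∑ j, Finset.univ.sup' ⟨⟨0, by omega⟩, Finset.mem_univ _⟩
          (fun i : Fin (2 * n + 2) => tightnessMatrix n δ i j))
        = Real.log ((4 * (1 + δ) + (2 * (n : ℝ) - 2) * (2 + 2 * δ)) / (4 + 2 * δ)) := by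
  rw [Real.exp_log (by linarith)]
  refine ⟨tightnessMatrix_nonneg hδ.le, sum_tightnessMatrix hn.le hδ.le,
    fun i h hih => tightnessMatrix_le_one_add_mul_of_adj hδ.le hih, ?_⟩
  rw [← sum_tightnessMatrix_self hn.le]
  exact congrArg Real.log
    (Finset.sum_congr rfl fun j _ => sup'_tightnessMatrix_eq_self hδ.le _ j)
end

section
/- Fix an integer n > 1. Then the one-sided limit lim_{δ → 0+} [ log( n(1+δ) ) / log( 4n(1+δ)/(4+2δ) ) ] = 1. Consequently, for the family of mechanisms K^{(δ)} on the n-component graph G from the tightness construction (with privacy level ε(δ) = log(1+δ), q = n components each of diameter d_t = 1, and leakage I_∞(X; K^{(δ)}(X)) = log(4n(1+δ)/(4+2δ)) under the uniform prior), the ratio of the upper bound log(Σ_{t=1}^{q} exp(ε(δ)·d_t)) = log(n(1+δ)) to the actual leakage tends to 1 as δ ↓ 0; i.e., the bound on information leakage is asymptotically tight. -/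
/-- Asymptotic tightness of the information-leakage bound: for fixed integer `n > 1`,
the ratio of the upper bound `log(∑_{t=1}^{n} exp(ε(δ)·1)) = log(n(1+δ))` to the
actual leakage `log(4n(1+δ)/(4+2δ))` of the construction tends to `1` as `δ → 0⁺`. -/
theorem tightness_limit (n : ℕ) (hn : 1 < n) :
    Filter.Tendsto
      (fun δ : ℝ => Real.log ((n : ℝ) * (1 + δ))
        / Real.log (4 * (n : ℝ) * (1 + δ) / (4 + 2 * δ)))
      (nhdsWithin 0 (Set.Ioi 0)) (nhds 1) := by
  have hn1 : (1 : ℝ) < (n : ℝ) := by exact_mod_cast hn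
  have hlogn : Real.log (n : ℝ) ≠ 0 := ne_of_gt (Real.log_pos hn1)
  have hcont : ContinuousAt
      (fun δ : ℝ => Real.log ((n : ℝ) * (1 + δ))
        / Real.log (4 * (n : ℝ) * (1 + δ) / (4 + 2 * δ))) 0 := by
    apply ContinuousAt.div
    · apply ContinuousAt.log
      · fun_prop
      · norm_num
        exact ne_of_gt (by linarith)
    · apply ContinuousAt.log
      · apply ContinuousAt.div <;> first | fun_prop | norm_num
      · norm_num
        intro h; nlinarith
    · have : 4 * (n : ℝ) * (1 + 0) / (4 + 2 * 0) = (n : ℝ) := by norm_num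
      rw [this]; exact hlogn
  have := hcont.continuousWithinAt (s := Set.Ioi (0:ℝ))
  simpa [ContinuousWithinAt, div_self hlogn] using this
end

section
/- Suppose the set of permissible databases is unconstrained, I = T^n, and let φ_1, …, φ_n be automorphisms of the secret graph G = (T,E). Define σ : T^n → T^n by σ((t_1,…,t_n)) = (φ_1(t_1), …, φ_n(t_n)). Then σ is an automorphism of the database adjacency graph (I,∼): σ is a bijection of T^n, and for all databases D, D' ∈ I, D ∼ D' if and only if σ(D) ∼ σ(D'). (In particular, tdiff(D,D') is in bijection with tdiff(σ(D),σ(D')) and sdiff(D,D') is in bijection with sdiff(σ(D),σ(D')).) -/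
/-- lifted map on triples -/
def liftTriple {T : Type*} {n : ℕ} (φ : Fin n → T ≃ T) :
    (Fin n × T × T) → (Fin n × T × T) :=
  fun x => (x.1, φ x.1 x.2.1, φ x.1 x.2.2)

lemma liftTriple_inj {T : Type*} {n : ℕ} (φ : Fin n → T ≃ T) :
    Function.Injective (liftTriple φ) := by
  rintro ⟨i, u, v⟩ ⟨j, w, x⟩ h
  simp only [liftTriple, Prod.mk.injEq] at h
  obtain ⟨rfl, h2, h3⟩ := h
  exact Prod.ext rfl (Prod.ext ((φ i).injective h2) ((φ i).injective h3))

lemma totalDiff_image {T : Type*} {n : ℕ} (φ : Fin n → T ≃ T) (D D' : Fin n → T) :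
    totalDiff (fun i => φ i (D i)) (fun i => φ i (D' i)) = liftTriple φ '' totalDiff D D' := by
  ext ⟨i, u, v⟩
  simp only [totalDiff, Set.mem_setOf_eq, Set.mem_image, liftTriple, Prod.mk.injEq, Prod.exists]
  constructor
  · rintro ⟨h1, h2, h3⟩
    refine ⟨i, D i, D' i, ⟨rfl, rfl, ?_⟩, rfl, h1, h2⟩
    intro h; exact h3 (by rw [← h1, ← h2, h])
  · rintro ⟨j, w, x, ⟨hw, hx, hne⟩, rfl, rfl, rfl⟩
    exact ⟨by rw [hw], by rw [hx], fun h => hne ((φ j).injective h)⟩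

lemma secretDiff_image {T : Type*} {n : ℕ} (G : SimpleGraph T) (φ : Fin n → T ≃ T)
    (hφ : ∀ (i : Fin n) (u v : T), G.Adj u v ↔ G.Adj (φ i u) (φ i v)) (D D' : Fin n → T) :
    secretDiff G (fun i => φ i (D i)) (fun i => φ i (D' i)) = liftTriple φ '' secretDiff G D D' := by
  ext x
  simp only [secretDiff, Set.mem_setOf_eq, Set.mem_image, totalDiff_image]
  constructor
  · rintro ⟨⟨y, hy, rfl⟩, hadj⟩
    exact ⟨y, ⟨hy, (hφ y.1 _ _).mpr hadj⟩, rfl⟩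
  · rintro ⟨y, ⟨hy, hadj⟩, rfl⟩
    exact ⟨⟨y, hy, rfl⟩, (hφ y.1 _ _).mp hadj⟩

lemma image_ssubset_iff' {T : Type*} {n : ℕ} (φ : Fin n → T ≃ T) (s t : Set (Fin n × T × T)) :
    liftTriple φ '' s ⊂ liftTriple φ '' t ↔ s ⊂ t := by
  rw [Set.ssubset_def, Set.ssubset_def, Set.image_subset_image_iff (liftTriple_inj φ),
    Set.image_subset_image_iff (liftTriple_inj φ)]

lemma blowfish_forward {T : Type*} (G : SimpleGraph T) {n : ℕ} (φ : Fin n → T ≃ T)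
    (hφ : ∀ (i : Fin n) (u v : T), G.Adj u v ↔ G.Adj (φ i u) (φ i v)) {D D' : Fin n → T} :
    BlowfishAdj G (Set.univ : Set (Fin n → T)) D D' →
      BlowfishAdj G (Set.univ : Set (Fin n → T))
        (fun i => φ i (D i)) (fun i => φ i (D' i)) := by
  rintro ⟨-, -, hne, hmin⟩
  refine ⟨trivial, trivial, ?_, ?_⟩
  · rw [secretDiff_image G φ hφ]
    intro h
    exact hne (Set.image_eq_empty.mp h)
  · rintro ⟨D'', -, hne'', hlt⟩
    set E : Fin n → T := fun i => (φ i).symm (D'' i) with hE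
    have hD'' : D'' = fun i => φ i (E i) := funext fun i => ((φ i).apply_symm_apply _).symm
    rw [hD''] at hne'' hlt
    rw [secretDiff_image G φ hφ] at hne''
    rw [secretDiff_image G φ hφ, secretDiff_image G φ hφ, totalDiff_image, totalDiff_image,
      image_ssubset_iff', image_ssubset_iff',
      Set.image_eq_image (liftTriple_inj φ)] at hlt
    exact hmin ⟨E, trivial, fun h => hne'' (by rw [h, Set.image_empty]), hlt⟩

/-- If the set of permissible databases is unconstrained (`I = T^n`) and
`φ_1, …, φ_n` are automorphisms of the secret graph `G`, then
`σ(D) = (φ_1(D_1), …, φ_n(D_n))` is an automorphism of the database adjacency graph: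
`σ` is a bijection of `T^n`, and `D ∼ D'` iff `σ(D) ∼ σ(D')`. -/
theorem secret_graph_automorphisms_lift {T : Type*} [Fintype T] (G : SimpleGraph T)
    (n : ℕ) (φ : Fin n → T ≃ T)
    (hφ : ∀ (i : Fin n) (u v : T), G.Adj u v ↔ G.Adj (φ i u) (φ i v)) :
    Function.Bijective (fun (D : Fin n → T) => (fun i => φ i (D i) : Fin n → T)) ∧
      ∀ D D' : Fin n → T,
        BlowfishAdj G (Set.univ : Set (Fin n → T)) D D' ↔
          BlowfishAdj G (Set.univ : Set (Fin n → T))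
            (fun i => φ i (D i)) (fun i => φ i (D' i)) := by
  constructor
  · constructor
    · intro D D' h
      funext i
      exact (φ i).injective (congrFun h i)
    · intro D
      exact ⟨fun i => (φ i).symm (D i), funext fun i => (φ i).apply_symm_apply _⟩
  · intro D D'
    constructor
    · exact blowfish_forward G φ hφ
    · intro h
      have hφ' : ∀ (i : Fin n) (u v : T), G.Adj u v ↔ G.Adj ((φ i).symm u) ((φ i).symm v) := by
        intro i u v
        rw [hφ i ((φ i).symm u) ((φ i).symm v), (φ i).apply_symm_apply, (φ i).apply_symm_apply]
      have := blowfish_forward G (fun i => (φ i).symm) hφ' h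
      have e1 : (fun i => (φ i).symm ((fun i => φ i (D i)) i)) = D :=
        funext fun i => (φ i).symm_apply_apply _
      have e2 : (fun i => (φ i).symm ((fun i => φ i (D' i)) i)) = D' :=
        funext fun i => (φ i).symm_apply_apply _
      rwa [e1, e2] at this
end
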